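/- Let G and H be finite simple graphs, each with at least two vertices, and suppose at least one of G, H contains an edge. Then the Cartesian (box) product G □ H is of class one. -/

import Mathlib

/-!
Take a minimum vertex cover `C` of `G □ H` and let the boat carry `C`, with `X` its (independent)
complement. If `y₁, y₂ ∈ C` have at most two common neighbours, then splitting `X` into the
non-neighbours of `y₁`, the neighbours of `y₁` but not of `y₂`, and the common neighbours gives
a feasible schedule with `Y₁ = {y₁}`, `Y₂ = {y₂}`.

In a box product, two vertices differing in both coordinates have at most two common neighbours,
and two vertices with different second coordinates have none when `H` is edgeless (symmetrically
for `G`). An edge `u u'` of `G` forces the cover to meet every row `VG × {b}`, an edge of `H`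
every column, so a cover always contains a suitable pair.
-/

open Finset

/-- `C` is a vertex cover of `G`: every edge has an endpoint in `C`. -/
def IsCover {V : Type*} (G : SimpleGraph V) (C : Finset V) : Prop :=
  ∀ ⦃u v : V⦄, G.Adj u v → u ∈ C ∨ v ∈ C

/-- `A` is an independent set of `G`: no two of its vertices are adjacent. -/
def IsIndep {V : Type*} (G : SimpleGraph V) (A : Finset V) : Prop :=
  ∀ ⦃u : V⦄, u ∈ A → ∀ ⦃v : V⦄, v ∈ A → ¬ G.Adj u v

/-- The vertex cover number β(G): the minimum size of a vertex cover of `G`. -/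
noncomputable def coverNumber {V : Type*} [Fintype V] (G : SimpleGraph V) : ℕ :=
  sInf {n : ℕ | ∃ C : Finset V, IsCover G C ∧ C.card = n}

/-- `G` admits a feasible schedule for a boat of capacity `b`, in the sense of the
structure theorem of Csorba, Hurkens and Woeginger. -/
def Feasible {V : Type*} [Fintype V] [DecidableEq V] (G : SimpleGraph V) (b : ℕ) : Prop :=
  ∃ X₁ X₂ X₃ Y₁ Y₂ : Finset V,
    Disjoint X₁ X₂ ∧ Disjoint X₁ X₃ ∧ Disjoint X₂ X₃ ∧
    IsIndep G (X₁ ∪ X₂ ∪ X₃) ∧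
    Y₁.Nonempty ∧ Y₂.Nonempty ∧
    Y₁ ⊆ Finset.univ \ (X₁ ∪ X₂ ∪ X₃) ∧ Y₂ ⊆ Finset.univ \ (X₁ ∪ X₂ ∪ X₃) ∧
    (Finset.univ \ (X₁ ∪ X₂ ∪ X₃)).card ≤ b ∧
    IsIndep G (X₁ ∪ Y₁) ∧ IsIndep G (X₂ ∪ Y₂) ∧
    X₃.card ≤ Y₁.card + Y₂.card

/-- `G` is of class one if it has a feasible schedule for boat capacity β(G). -/
def ClassOne {V : Type*} [Fintype V] [DecidableEq V] (G : SimpleGraph V) : Prop :=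
  Feasible G (coverNumber G)

/-- `G` is of class two if it is not of class one. -/
def ClassTwo {V : Type*} [Fintype V] [DecidableEq V] (G : SimpleGraph V) : Prop :=
  ¬ ClassOne G

open SimpleGraph

section Cover

variable {V : Type*} {K : SimpleGraph V}

theorem exists_isCover_card_eq_coverNumber [Fintype V] (K : SimpleGraph V) :
    ∃ C : Finset V, IsCover K C ∧ #C = coverNumber K :=
  Nat.sInf_mem (s := {n | ∃ C : Finset V, IsCover K C ∧ #C = n})
    ⟨_, univ, fun u _ _ => Or.inl (mem_univ u), rfl⟩

theorem IsIndep.mono {A B : Finset V} (hB : IsIndep K B) (hAB : A ⊆ B) : IsIndep K A :=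
  fun _ hu _ hv => hB (hAB hu) (hAB hv)

variable [DecidableEq V]

theorem IsIndep.union_singleton {A : Finset V} (hA : IsIndep K A) {y : V}
    (hy : ∀ x ∈ A, ¬ K.Adj y x) : IsIndep K (A ∪ {y}) := by
  intro u hu v hv huv
  simp only [mem_union, mem_singleton] at hu hv
  rcases hu with hu | rfl <;> rcases hv with hv | rfl
  · exact hA hu hv huv
  · exact hy u hu huv.symm
  · exact hy v hv huv
  · exact K.irrefl huv

variable [Fintype V]

theorem IsCover.isIndep_compl {C : Finset V} (hC : IsCover K C) : IsIndep K (univ \ C) := by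
  intro u hu v hv huv
  rcases hC huv with h | h
  · exact (mem_sdiff.1 hu).2 h
  · exact (mem_sdiff.1 hv).2 h

theorem feasible_card_of_isCover {C : Finset V} (hC : IsCover K C) {y₁ y₂ : V}
    (hy₁ : y₁ ∈ C) (hy₂ : y₂ ∈ C) (hcommon : (K.commonNeighbors y₁ y₂).ncard ≤ 2) :
    Feasible K #C := by
  classical
  set X := univ \ C
  have hX : IsIndep K X := hC.isIndep_compl
  set N₁ := X.filter (K.Adj y₁)
  have hunion :
      X.filter (¬ K.Adj y₁ ·) ∪ N₁.filter (¬ K.Adj y₂ ·) ∪ N₁.filter (K.Adj y₂) = X := by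
    rw [union_assoc, union_comm (N₁.filter _), filter_union_filter_not_eq, union_comm,
      filter_union_filter_not_eq]
  have hX₃ : #(N₁.filter (K.Adj y₂)) ≤ 2 := by
    rw [← Set.ncard_coe_finset]
    refine le_trans (Set.ncard_le_ncard ?_ (Set.toFinite _)) hcommon
    intro z hz
    simp only [coe_filter, N₁, mem_filter, Set.mem_ofPred_eq] at hz
    exact K.mem_commonNeighbors.2 ⟨hz.1.2, hz.2⟩
  refine ⟨X.filter (¬ K.Adj y₁ ·), N₁.filter (¬ K.Adj y₂ ·), N₁.filter (K.Adj y₂),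
    {y₁}, {y₂}, ?_⟩
  rw [hunion, show univ \ X = C by simp [X]]
  refine ⟨(disjoint_filter_filter_not X X _).symm.mono_right (filter_subset _ _),
    (disjoint_filter_filter_not X X _).symm.mono_right (filter_subset _ _),
    (disjoint_filter_filter_not N₁ N₁ _).symm, hX, singleton_nonempty _, singleton_nonempty _,
    singleton_subset_iff.2 hy₁, singleton_subset_iff.2 hy₂, le_rfl, ?_, ?_, by simpa using hX₃⟩
  · exact (hX.mono (filter_subset _ _)).union_singleton fun x hx => (mem_filter.1 hx).2
  · exact (hX.mono ((filter_subset _ _).trans (filter_subset _ _))).union_singleton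
      fun x hx => (mem_filter.1 hx).2

end Cover

theorem exists_fst_ne_snd_ne {α β : Type*} [Nontrivial α] [Nontrivial β] {S : Set (α × β)}
    (hfst : ∀ a, ∃ x ∈ S, x.1 = a) (hsnd : ∀ b, ∃ x ∈ S, x.2 = b) :
    ∃ x ∈ S, ∃ y ∈ S, x.1 ≠ y.1 ∧ x.2 ≠ y.2 := by
  obtain ⟨b₁, b₂, hb⟩ := exists_pair_ne β
  obtain ⟨x, hx, rfl⟩ := hsnd b₁
  obtain ⟨y, hy, rfl⟩ := hsnd b₂
  by_cases hxy : x.1 = y.1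
  · obtain ⟨a, ha⟩ := exists_ne x.1
    obtain ⟨z, hz, rfl⟩ := hfst a
    by_cases hzx : z.2 = x.2
    · exact ⟨z, hz, y, hy, hxy ▸ ha, hzx ▸ hb⟩
    · exact ⟨z, hz, x, hx, ha, hzx⟩
  · exact ⟨x, hx, y, hy, hxy, hb⟩

namespace SimpleGraph

variable {α β : Type*} {G : SimpleGraph α} {H : SimpleGraph β}

theorem boxProd_commonNeighbors_subset {x y : α × β} (h₁ : x.1 ≠ y.1) (h₂ : x.2 ≠ y.2) :
    (G □ H).commonNeighbors x y ⊆ {(y.1, x.2), (x.1, y.2)} := by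
  intro z hz
  rw [mem_commonNeighbors, boxProd_adj, boxProd_adj] at hz
  obtain ⟨⟨-, hx⟩ | ⟨-, hx⟩, ⟨-, hy⟩ | ⟨-, hy⟩⟩ := hz
  · exact absurd (hx.trans hy.symm) h₂
  · exact Or.inl (Prod.ext hy.symm hx.symm)
  · exact Or.inr (Prod.ext hx.symm hy.symm)
  · exact absurd (hx.trans hy.symm) h₁

theorem boxProd_commonNeighbors_ncard_le_two {x y : α × β} (h₁ : x.1 ≠ y.1)
    (h₂ : x.2 ≠ y.2) :
    ((G □ H).commonNeighbors x y).ncard ≤ 2 :=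
  (Set.ncard_le_ncard (boxProd_commonNeighbors_subset h₁ h₂) (Set.toFinite _)).trans <|
    (Set.ncard_insert_le _ _).trans (by simp)

theorem boxProd_bot_commonNeighbors_eq_empty {x y : α × β} (h : x.2 ≠ y.2) :
    (G □ (⊥ : SimpleGraph β)).commonNeighbors x y = ∅ := by
  ext z
  simp only [mem_commonNeighbors, boxProd_adj, bot_adj, Set.mem_empty_iff_false, iff_false]
  rintro ⟨⟨-, hx⟩ | ⟨⟨⟩, -⟩, ⟨-, hy⟩ | ⟨⟨⟩, -⟩⟩
  exact h (hx.trans hy.symm)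

theorem bot_boxProd_commonNeighbors_eq_empty {x y : α × β} (h : x.1 ≠ y.1) :
    ((⊥ : SimpleGraph α) □ H).commonNeighbors x y = ∅ := by
  ext z
  simp only [mem_commonNeighbors, boxProd_adj, bot_adj, Set.mem_empty_iff_false, iff_false]
  rintro ⟨⟨⟨⟩, -⟩ | ⟨-, hx⟩, ⟨⟨⟩, -⟩ | ⟨-, hy⟩⟩
  exact h (hx.trans hy.symm)

end SimpleGraph

section BoxProdCover

variable {α β : Type*} {G : SimpleGraph α} {H : SimpleGraph β} {C : Finset (α × β)}

theorem IsCover.exists_snd_eq_of_adj (hC : IsCover (G □ H) C) {u u' : α} (h : G.Adj u u')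
    (b : β) : ∃ x ∈ C, x.2 = b := by
  rcases hC (boxProd_adj.2 (Or.inl ⟨h, rfl⟩) : (G □ H).Adj (u, b) (u', b)) with h | h <;>
    exact ⟨_, h, rfl⟩

theorem IsCover.exists_fst_eq_of_adj (hC : IsCover (G □ H) C) {v v' : β} (h : H.Adj v v')
    (a : α) : ∃ x ∈ C, x.1 = a := by
  rcases hC (boxProd_adj.2 (Or.inr ⟨h, rfl⟩) : (G □ H).Adj (a, v) (a, v')) with h | h <;>
    exact ⟨_, h, rfl⟩

end BoxProdCover

/-- If `G` and `H` each have at least two vertices and at least one of them has an edge,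
then the box product `G □ H` is of class one. -/
theorem boxProd_classOne {VG VH : Type*} [Fintype VG] [Fintype VH]
    [DecidableEq VG] [DecidableEq VH]
    (G : SimpleGraph VG) (H : SimpleGraph VH)
    (hG : 2 ≤ Fintype.card VG) (hH : 2 ≤ Fintype.card VH)
    (hedge : (∃ u v, G.Adj u v) ∨ (∃ u v, H.Adj u v)) :
    ClassOne (G □ H) := by
  have : Nontrivial VG := Fintype.one_lt_card_iff_nontrivial.1 hG
  have : Nontrivial VH := Fintype.one_lt_card_iff_nontrivial.1 hH
  obtain ⟨C, hC, hCcard⟩ := exists_isCover_card_eq_coverNumber (G □ H)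
  suffices ∃ x ∈ C, ∃ y ∈ C, ((G □ H).commonNeighbors x y).ncard ≤ 2 by
    obtain ⟨x, hx, y, hy, hxy⟩ := this
    rw [ClassOne, ← hCcard]
    exact feasible_card_of_isCover hC hx hy hxy
  by_cases hG₀ : G = ⊥
  · subst hG₀
    obtain ⟨v, v', hv⟩ := hedge.resolve_left (by simp)
    obtain ⟨a₁, a₂, ha⟩ := exists_pair_ne VG
    obtain ⟨x, hx, rfl⟩ := hC.exists_fst_eq_of_adj hv a₁
    obtain ⟨y, hy, rfl⟩ := hC.exists_fst_eq_of_adj hv a₂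
    exact ⟨x, hx, y, hy, by simp [bot_boxProd_commonNeighbors_eq_empty ha]⟩
  obtain ⟨u, u', hu⟩ := ne_bot_iff_exists_adj.1 hG₀
  by_cases hH₀ : H = ⊥
  · subst hH₀
    obtain ⟨b₁, b₂, hb⟩ := exists_pair_ne VH
    obtain ⟨x, hx, rfl⟩ := hC.exists_snd_eq_of_adj hu b₁
    obtain ⟨y, hy, rfl⟩ := hC.exists_snd_eq_of_adj hu b₂
    exact ⟨x, hx, y, hy, by simp [boxProd_bot_commonNeighbors_eq_empty hb]⟩
  obtain ⟨v, v', hv⟩ := ne_bot_iff_exists_adj.1 hH₀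
  obtain ⟨x, hx, y, hy, h₁, h₂⟩ :=
    exists_fst_ne_snd_ne (S := (C : Set (VG × VH))) (hC.exists_fst_eq_of_adj hv)
      (hC.exists_snd_eq_of_adj hu)
  exact ⟨x, hx, y, hy, boxProd_commonNeighbors_ncard_le_two h₁ h₂⟩
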